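/- arXiv:2310.07924 — 9 statements merged into one kernel-verified Lean document; each statement's English description precedes it below -/
import Mathlib

section
/- M_{a,b} is closed under multiplication if and only if a² ≡ a (mod b). -/
/-- Membership in the arithmetic congruence monoid `M_{a,b}`. -/
def memACM (a b n : ℕ) : Prop := (1 ≤ n ∧ n ≡ a [MOD b]) ∨ n = 1

theorem acm_closed_iff_idempotent (a b : ℕ) (ha : 0 < a) (hb : 0 < b) (hab : a ≤ b) :
    (∀ m n : ℕ, memACM a b m → memACM a b n → memACM a b (m * n)) ↔ a ^ 2 ≡ a [MOD b] := by
  constructor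
  · intro h
    have hA : memACM a b a := Or.inl ⟨ha, Nat.ModEq.refl a⟩
    have := h a a hA hA
    rcases this with ⟨-, hmod⟩ | h1
    · simpa [pow_two] using hmod
    · have : a = 1 := Nat.eq_one_of_mul_eq_one_right h1
      subst this
      simp [Nat.ModEq.refl]
  · intro hidem m n hm hn
    rcases hm with ⟨hm1, hmm⟩ | rfl
    · rcases hn with ⟨hn1, hnn⟩ | rfl
      · exact Or.inl ⟨Nat.one_le_iff_ne_zero.mpr (by positivity),
          ((hmm.mul hnn).trans (by simpa [pow_two] using hidem))⟩
      · rw [Nat.mul_one]; exact Or.inl ⟨hm1, hmm⟩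
    · simpa using hn
end

section
/- In the Meyerson monoid M_{4,6}, for every k ≥ 1 the element 4·7^k is an atom; that is, it cannot be written as a product of two elements of M_{4,6} both greater than 1. -/
/-- Membership in the Meyerson monoid `M_{4,6}`. -/
def memM46 (n : ℕ) : Prop := (1 ≤ n ∧ n ≡ 4 [MOD 6]) ∨ n = 1

theorem meyerson_atoms (k : ℕ) (hk : 1 ≤ k) :
    ¬ ∃ m m' : ℕ, memM46 m ∧ memM46 m' ∧ 1 < m ∧ 1 < m' ∧ 4 * 7 ^ k = m * m' := by
  rintro ⟨m, m', hm, hm', h1, h1', heq⟩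
  have hm4 : m % 6 = 4 := by
    rcases hm with ⟨_, h⟩ | h
    · simpa [Nat.ModEq] using h
    · omega
  have hm'4 : m' % 6 = 4 := by
    rcases hm' with ⟨_, h⟩ | h
    · simpa [Nat.ModEq] using h
    · omega
  obtain ⟨a, ha⟩ : 2 ∣ m := by omega
  obtain ⟨b, hb⟩ : 2 ∣ m' := by omega
  have hab : a * b = 7 ^ k := by
    have : 4 * 7 ^ k = 4 * (a * b) := by rw [heq, ha, hb]; ring
    omega
  have hadvd : a ∣ 7 ^ k := ⟨b, hab.symm⟩
  obtain ⟨j, hj, hja⟩ := (Nat.dvd_prime_pow (by norm_num)).mp hadvd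
  have h7 : 7 ^ j % 3 = 1 := by
    simp [Nat.pow_mod]
  have ha3 : a % 3 = 1 := by rw [hja]; exact h7
  omega
end

section
/- For b ≥ 1 and a = b, the atomic density of M_{b,b} equals 1 − 1/b; that is, the limit as n → ∞ of |{atoms of M_{b,b}} ∩ {1,…,n}| / |M_{b,b} ∩ {1,…,n}| equals 1 − 1/b. -/
open scoped Classical

/-- Membership in `M_{b,b}`. -/
def memMbb (b n : ℕ) : Prop := (1 ≤ n ∧ b ∣ n) ∨ n = 1

/-- `n` is an atom of `M_{b,b}`. -/
def atomMbb (b n : ℕ) : Prop :=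
  memMbb b n ∧ 1 < n ∧ ¬ ∃ m m' : ℕ, memMbb b m ∧ memMbb b m' ∧ 1 < m ∧ 1 < m' ∧ n = m * m'

/-!
For `b ≥ 2` every element `≠ 1` of `M_{b,b}` is a multiple of `b`, so a product of two non-units
is a multiple of `b²`; conversely `b² t = b · (b t)`. Hence the atoms are the multiples of `b`
that are not multiples of `b²`, and up to `n` there are `⌊n/b⌋ - ⌊n/b²⌋` of them among
`⌊n/b⌋ + 1` elements, a ratio tending to `1 - 1/b`. For `b = 1` the monoid is `ℕ≥1`, its atoms
are the primes, and `π(n)/n → 0` by Chebyshev's bound `π(x) = O(x / log x)`.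
-/

open Filter Finset
open scoped Nat.Prime Topology

theorem tendsto_primeCounting_div_self :
    Tendsto (fun n : ℕ => (π n : ℝ) / n) atTop (𝓝 0) := by
  have hlog : Tendsto (fun n : ℕ => (Real.log 4 + 1) / Real.log n) atTop (𝓝 0) :=
    tendsto_const_nhds.div_atTop (Real.tendsto_log_atTop.comp tendsto_natCast_atTop_atTop)
  have hcheb := tendsto_natCast_atTop_atTop.eventually
    (Chebyshev.eventually_primeCounting_le one_pos)
  refine squeeze_zero' (.of_forall fun n => div_nonneg (Nat.cast_nonneg _) (Nat.cast_nonneg _))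
    ?_ hlog
  filter_upwards [hcheb, eventually_gt_atTop 0] with n hn hn0
  rw [Nat.floor_natCast] at hn
  rw [div_le_iff₀ (by positivity)]
  calc (π n : ℝ) ≤ (Real.log 4 + 1) * n / Real.log n := hn
    _ = (Real.log 4 + 1) / Real.log n * n := by ring

theorem tendsto_natCast_div_div_self (b : ℕ) :
    Tendsto (fun n : ℕ => ((n / b : ℕ) : ℝ) / n) atTop (𝓝 (1 / b)) := by
  have h := (tendsto_nat_floor_mul_div_atTop (R := ℝ) (a := 1 / (b : ℝ)) (by positivity)).comp
    tendsto_natCast_atTop_atTop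
  convert h using 3 with n
  simp [← div_eq_inv_mul, Nat.floor_div_natCast]

theorem tendsto_sub_div_div_add_one (b : ℕ) :
    Tendsto (fun m : ℕ => ((m - m / b : ℕ) : ℝ) / (m + 1 : ℕ)) atTop (𝓝 (1 - 1 / b)) := by
  have h := ((tendsto_const_nhds (x := (1 : ℝ))).sub (tendsto_natCast_div_div_self b)).mul
    (tendsto_natCast_div_add_atTop (1 : ℝ))
  rw [mul_one] at h
  refine h.congr' ?_
  filter_upwards [eventually_gt_atTop 0] with m hm
  rw [Nat.cast_sub (Nat.div_le_self m b)]
  field_simp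
  push_cast
  ring

theorem card_filter_prime_Icc (n : ℕ) : #{k ∈ Icc 1 n | k.Prime} = π n := by
  rw [← Nat.primesLE_card_eq_primeCounting]
  congr 1
  ext p
  simp only [mem_filter, mem_Icc, Nat.mem_primesLE]
  exact ⟨fun ⟨⟨_, hn⟩, hp⟩ => ⟨hn, hp⟩, fun ⟨hn, hp⟩ => ⟨⟨hp.one_le, hn⟩, hp⟩⟩

theorem card_filter_dvd_Icc (b n : ℕ) : #{k ∈ Icc 1 n | b ∣ k} = n / b := by
  simpa [← Icc_add_one_left_eq_Ioc] using Nat.Ioc_filter_dvd_card_eq_div n b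

theorem memMbb_one_iff (k : ℕ) : memMbb 1 k ↔ 1 ≤ k := by
  simp only [memMbb, one_dvd, and_true]
  omega

theorem atomMbb_one_iff (k : ℕ) : atomMbb 1 k ↔ k.Prime := by
  rw [← Nat.irreducible_iff_nat_prime, irreducible_iff, Nat.isUnit_iff]
  simp only [atomMbb, memMbb_one_iff, Nat.isUnit_iff]
  constructor
  · rintro ⟨-, hk, hirr⟩
    refine ⟨hk.ne', fun m m' h => ?_⟩
    by_contra! hm
    have hpos : 0 < m ∧ 0 < m' := CanonicallyOrderedAdd.mul_pos.mp (h ▸ by omega)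
    exact hirr ⟨m, m', by omega, by omega, by omega, by omega, h⟩
  · rintro ⟨hk, hirr⟩
    have hk0 : k ≠ 0 := by
      rintro rfl
      simpa using hirr (show 0 = 0 * 2 from rfl)
    refine ⟨by omega, by omega, ?_⟩
    rintro ⟨m, m', -, -, hm, hm', h⟩
    rcases hirr h with rfl | rfl <;> omega

theorem dvd_of_memMbb_of_one_lt {b k : ℕ} (hk : memMbb b k) (h1 : 1 < k) : b ∣ k := by
  rcases hk with ⟨-, h⟩ | rfl
  · exact h
  · omega

theorem atomMbb_iff_of_one_lt {b : ℕ} (hb : 1 < b) (k : ℕ) :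
    atomMbb b k ↔ b ∣ k ∧ ¬ b * b ∣ k := by
  constructor
  · rintro ⟨hk, hk1, hirr⟩
    refine ⟨dvd_of_memMbb_of_one_lt hk hk1, ?_⟩
    rintro ⟨t, rfl⟩
    have ht : 0 < t := Nat.pos_of_mul_pos_left (by omega : 0 < b * b * t)
    exact hirr ⟨b, b * t, Or.inl ⟨hb.le, dvd_rfl⟩,
      Or.inl ⟨Nat.one_le_iff_ne_zero.mpr (by positivity), dvd_mul_right b t⟩,
      hb, one_lt_mul_of_lt_of_le hb ht, mul_assoc b b t⟩
  · rintro ⟨hdvd, hsq⟩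
    have hk : k ≠ 0 := by
      rintro rfl
      exact hsq (dvd_zero _)
    refine ⟨Or.inl ⟨Nat.one_le_iff_ne_zero.mpr hk, hdvd⟩, ?_, ?_⟩
    · have := Nat.le_of_dvd (Nat.pos_of_ne_zero hk) hdvd
      omega
    · rintro ⟨m, m', hm, hm', hm1, hm'1, rfl⟩
      exact hsq (mul_dvd_mul (dvd_of_memMbb_of_one_lt hm hm1) (dvd_of_memMbb_of_one_lt hm' hm'1))

theorem card_filter_memMbb {b : ℕ} (hb : 1 < b) {n : ℕ} (hn : 1 ≤ n) :
    #{k ∈ Icc 1 n | memMbb b k} = n / b + 1 := by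
  have h : {k ∈ Icc 1 n | memMbb b k} = insert 1 {k ∈ Icc 1 n | b ∣ k} := by
    ext k
    simp only [memMbb, mem_filter, mem_insert, mem_Icc]
    grind
  rw [h, card_insert_of_notMem, card_filter_dvd_Icc]
  simp only [mem_filter, Nat.dvd_one]
  omega

theorem card_filter_atomMbb {b : ℕ} (hb : 1 < b) (n : ℕ) :
    #{k ∈ Icc 1 n | atomMbb b k} = n / b - n / (b * b) := by
  simp only [atomMbb_iff_of_one_lt hb, filter_and_not]
  rw [card_sdiff_of_subset (monotone_filter_right _ fun _ _ => dvd_of_mul_left_dvd),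
    card_filter_dvd_Icc, card_filter_dvd_Icc]

theorem atomic_density_Mbb (b : ℕ) (hb : 1 ≤ b) :
    Filter.Tendsto
      (fun n : ℕ =>
        (((Finset.Icc 1 n).filter (fun k => atomMbb b k)).card : ℝ) /
          (((Finset.Icc 1 n).filter (fun k => memMbb b k)).card : ℝ))
      Filter.atTop (nhds (1 - 1 / (b : ℝ))) := by
  obtain rfl | hb1 := hb.eq_or_lt
  · have hmem (n : ℕ) : {k ∈ Icc 1 n | memMbb 1 k} = Icc 1 n :=
      filter_true_of_mem fun k hk => (memMbb_one_iff k).mpr (mem_Icc.mp hk).1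
    simpa [atomMbb_one_iff, hmem, card_filter_prime_Icc] using tendsto_primeCounting_div_self
  · refine ((tendsto_sub_div_div_add_one b).comp
      (Nat.tendsto_div_const_atTop (n := b) (by omega))).congr' ?_
    filter_upwards [eventually_ge_atTop 1] with n hn
    simp [card_filter_atomMbb hb1, card_filter_memMbb hb1 hn, Nat.div_div_eq_div_mul]
end

section
/- Let M_{a,b} be an ACM, q = gcd(a,b). Every n ∈ M_{a,b} with n > 1 and q² ∤ n is an atom of M_{a,b}. -/
theorem acm_not_gcd_sq_dvd_atom (a b : ℕ) (ha : 1 ≤ a) (hab : a ≤ b)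
    (hidem : a ^ 2 ≡ a [MOD b]) (q : ℕ) (hq : q = Nat.gcd a b)
    (n : ℕ) (hn : memACM a b n) (hn1 : 1 < n) (hnq : ¬ q ^ 2 ∣ n) :
    ¬ ∃ m m' : ℕ, memACM a b m ∧ memACM a b m' ∧ 1 < m ∧ 1 < m' ∧ n = m * m' := by
  rintro ⟨m, m', hm, hm', hm1, hm'1, rfl⟩
  have key : ∀ k : ℕ, memACM a b k → 1 < k → q ∣ k := by
    rintro k (⟨-, hk⟩ | rfl) hk1
    · have h1 : k ≡ a [MOD q] := hk.of_dvd (hq ▸ Nat.gcd_dvd_right a b)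
      have h2 : a ≡ 0 [MOD q] :=
        (Nat.modEq_zero_iff_dvd).2 (hq ▸ Nat.gcd_dvd_left a b)
      exact (Nat.modEq_zero_iff_dvd).1 (h1.trans h2)
    · omega
  exact hnq (by rw [sq]; exact Nat.mul_dvd_mul (key m hm hm1) (key m' hm' hm'1))
end

section
/- Let M_{a,b} be an ACM with a < b, q = gcd(a,b), a = q·a', b = q·b'. If p₁, p₂ are primes with p₁ ≡ p₂ ≡ a' (mod b'), p₁, p₂ ∤ q, and n ∈ M_{a,b} satisfies q² ∣ n and p₁p₂ ∣ n, then n is reducible in M_{a,b} (a product of two non-units). -/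
theorem acm_reducibility_criterion (a b : ℕ) (ha : 1 ≤ a) (hab : a < b)
    (hidem : a ^ 2 ≡ a [MOD b]) (q a' b' : ℕ) (hq : q = Nat.gcd a b)
    (ha' : a = q * a') (hb' : b = q * b')
    (p₁ p₂ : ℕ) (hp₁ : p₁.Prime) (hp₂ : p₂.Prime)
    (hp₁c : p₁ ≡ a' [MOD b']) (hp₂c : p₂ ≡ a' [MOD b'])
    (hp₁q : ¬ p₁ ∣ q) (hp₂q : ¬ p₂ ∣ q)
    (n : ℕ) (hn : memACM a b n) (hq2 : q ^ 2 ∣ n) (hpp : p₁ * p₂ ∣ n) :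
    ∃ m m' : ℕ, memACM a b m ∧ memACM a b m' ∧ 1 < m ∧ 1 < m' ∧ n = m * m' := by
  have hq0 : 0 < q := hq ▸ Nat.gcd_pos_of_pos_left b ha
  have hc1 : Nat.Coprime p₁ q := (Nat.Prime.coprime_iff_not_dvd hp₁).2 hp₁q
  have hc2 : Nat.Coprime p₂ q := (Nat.Prime.coprime_iff_not_dvd hp₂).2 hp₂q
  have hcq : Nat.Coprime (q ^ 2) (p₁ * p₂) :=
    Nat.Coprime.pow_left 2 (hc1.symm.mul_right hc2.symm)
  obtain ⟨s, hs⟩ : q ^ 2 * (p₁ * p₂) ∣ n :=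
    Nat.Coprime.mul_dvd_of_dvd_of_dvd hcq hq2 hpp
  have hp₁2 := hp₁.two_le
  have hp₂2 := hp₂.two_le
  have hn1 : n ≠ 1 := by
    intro h
    have := Nat.le_of_dvd (h ▸ one_pos) hpp
    nlinarith
  have hmem : 1 ≤ n ∧ n ≡ a [MOD b] := hn.resolve_right hn1
  have hs0 : 0 < s := by
    rcases Nat.eq_zero_or_pos s with h | h
    · exfalso; rw [h, mul_zero] at hs; omega
    · exact h
  -- gcd a' b' = 1
  have hab' : Nat.Coprime a' b' := by
    have h : q * Nat.gcd a' b' = q * 1 := by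
      rw [← Nat.gcd_mul_left, ← ha', ← hb', ← hq, mul_one]
    exact Nat.eq_of_mul_eq_mul_left hq0 h
  -- q * a' ≡ 1 [MOD b']
  have hqa1 : q * a' ≡ 1 [MOD b'] := by
    have h1 : q * ((q * a') * a') ≡ q * a' [MOD q * b'] := by
      have := hidem
      rw [ha', hb'] at this
      calc q * ((q * a') * a') = (q * a') ^ 2 := by ring
        _ ≡ q * a' [MOD q * b'] := this
    have h2 : (q * a') * a' ≡ 1 * a' [MOD b'] := by
      simpa using Nat.ModEq.mul_left_cancel' hq0.ne' h1
    exact Nat.ModEq.cancel_right_of_coprime hab'.symm h2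
  have hnb' : n ≡ q * a' [MOD b'] := by
    have := hmem.2
    rw [hb'] at this
    exact ha' ▸ this.of_mul_left q
  have h1 : q * p₁ ≡ 1 [MOD b'] := (hp₁c.mul_left q).trans hqa1
  have h2 : q * p₂ ≡ 1 [MOD b'] := (hp₂c.mul_left q).trans hqa1
  have hsc : s ≡ q * a' [MOD b'] := by
    calc s = 1 * (1 * s) := by ring
      _ ≡ (q * p₁) * ((q * p₂) * s) [MOD b'] := (h1.mul (h2.mul Nat.ModEq.rfl)).symm
      _ = n := by rw [hs]; ring
      _ ≡ q * a' [MOD b'] := hnb'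
  have hmc : p₁ * s ≡ a' [MOD b'] := by
    calc p₁ * s ≡ a' * (q * a') [MOD b'] := hp₁c.mul hsc
      _ ≡ a' * 1 [MOD b'] := hqa1.mul_left a'
      _ = a' := by ring
  have hm1 : 1 < q * (p₁ * s) := by
    have : 1 * (2 * 1) ≤ q * (p₁ * s) := Nat.mul_le_mul hq0 (Nat.mul_le_mul hp₁2 hs0)
    omega
  have hm2 : 1 < q * p₂ := by
    have : 1 * 2 ≤ q * p₂ := Nat.mul_le_mul hq0 hp₂2
    omega
  refine ⟨q * (p₁ * s), q * p₂, Or.inl ⟨hm1.le, ?_⟩, Or.inl ⟨hm2.le, ?_⟩,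
    hm1, hm2, by rw [hs]; ring⟩
  · rw [ha', hb']; exact hmc.mul_left' q
  · rw [ha', hb']; exact hp₂c.mul_left' q
end

section
/- In the Meyerson monoid M_{4,6}, if n ∈ M_{4,6} is divisible by 4 and there exist two distinct primes p, p' ≡ 5 (mod 6) with p·p' ∣ n, then n is reducible in M_{4,6}. -/
/-!
Dividing out `2p` suffices: `2p ≡ 10 ≡ 4 (mod 6)`, and since `p` is odd and `4 ∣ n`, the cofactor
`n / 2p` is even; it is `≡ 1 (mod 3)` because `2p ≡ 1 ≡ n (mod 3)`, hence it is `≡ 4 (mod 6)` too.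
-/

theorem memM46_of_modEq_four {n : ℕ} (h : n ≡ 4 [MOD 6]) : memM46 n :=
  Or.inl ⟨by unfold Nat.ModEq at h; omega, h⟩

theorem modEq_four_of_memM46_of_even {n : ℕ} (hn : memM46 n) (h2 : 2 ∣ n) : n ≡ 4 [MOD 6] := by
  rcases hn with ⟨-, h⟩ | rfl
  · exact h
  · omega

theorem modEq_four_of_mul_modEq_four {m k : ℕ} (hm : m ≡ 4 [MOD 6]) (hmk : m * k ≡ 4 [MOD 6])
    (hk : 2 ∣ k) : k ≡ 4 [MOD 6] := by
  have hm3 : m % 3 = 1 := by unfold Nat.ModEq at hm; omega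
  have hmk3 : m * k % 3 = 1 := by unfold Nat.ModEq at hmk; omega
  have hk3 : k % 3 = 1 := by rw [Nat.mul_mod, hm3, one_mul, Nat.mod_mod] at hmk3; exact hmk3
  unfold Nat.ModEq
  omega

theorem exists_memM46_mul_of_two_mul_dvd {m n : ℕ} (hm : m ≡ 4 [MOD 6]) (hn : n ≡ 4 [MOD 6])
    (hmn : 2 * m ∣ n) :
    ∃ a b : ℕ, memM46 a ∧ memM46 b ∧ 1 < a ∧ 1 < b ∧ n = a * b := by
  obtain ⟨j, rfl⟩ := hmn
  have hb : 2 * j ≡ 4 [MOD 6] :=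
    modEq_four_of_mul_modEq_four hm (by rwa [mul_left_comm, ← mul_assoc]) (dvd_mul_right 2 j)
  refine ⟨m, 2 * j, memM46_of_modEq_four hm, memM46_of_modEq_four hb, ?_, ?_, by ring⟩
  · unfold Nat.ModEq at hm; omega
  · unfold Nat.ModEq at hb; omega

theorem meyerson_reducible_general (n : ℕ) (hn : memM46 n) (h4 : 4 ∣ n)
    (p p' : ℕ) (hpc : p ≡ 5 [MOD 6]) (hdvd : p * p' ∣ n) :
    ∃ m m' : ℕ, memM46 m ∧ memM46 m' ∧ 1 < m ∧ 1 < m' ∧ n = m * m' := by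
  have hn4 : n ≡ 4 [MOD 6] := modEq_four_of_memM46_of_even hn (dvd_trans (by norm_num) h4)
  have h2p : 2 * p ≡ 4 [MOD 6] := hpc.mul_left 2
  have hp_odd : Odd p := Nat.odd_iff.mpr (by unfold Nat.ModEq at hpc; omega)
  have hcop : Nat.Coprime 4 p := Nat.Coprime.pow_left 2 hp_odd.coprime_two_left
  have h4p : 2 * (2 * p) ∣ n := by
    rw [← mul_assoc]
    exact hcop.mul_dvd_of_dvd_of_dvd h4 (dvd_of_mul_right_dvd hdvd)
  exact exists_memM46_mul_of_two_mul_dvd h2p hn4 h4p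

theorem meyerson_reducible (n : ℕ) (hn : memM46 n) (h4 : 4 ∣ n)
    (p p' : ℕ) (hp : p.Prime) (hp' : p'.Prime) (hne : p ≠ p')
    (hpc : p ≡ 5 [MOD 6]) (hp'c : p' ≡ 5 [MOD 6]) (hdvd : p * p' ∣ n) :
    ∃ m m' : ℕ, memM46 m ∧ memM46 m' ∧ 1 < m ∧ 1 < m' ∧ n = m * m' :=
  meyerson_reducible_general n hn h4 p p' hpc hdvd
end

section
/- Let M_{a,b} be an ACM with a < b, q = gcd(a,b), writing a = qa', b = qb'. If n is an atom of M_{a,b} with q² ∣ n, then the number of prime factors of n (with multiplicity) lying in the class a' mod b' and not dividing q exceeds the number of such prime factors of q² by at most one. -/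
/-- The number of prime factors of `n`, with multiplicity, congruent to `a'` mod `b'`
and not dividing `q`. -/
def countClassFactors (a' b' q n : ℕ) : ℕ :=
  (n.primeFactorsList.filter (fun p => decide (p ≡ a' [MOD b'] ∧ ¬ p ∣ q))).length

/-!
Write `n = q² w`. Idempotence of `a` together with `gcd(a', b') = 1` makes `q` an inverse of `a'`
modulo `b'`, and `n ≡ a (mod b)` becomes `q w ≡ a' (mod b')`. If `w` had two prime factors
`≡ a' (mod b')`, split off one of them, `w = p v` with `v > 1`; then `v ≡ v q a' ≡ q p v ≡ a'`,
so `n = (q p)(q v)` is a product of two non-units of `M_{a,b}`.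
-/

lemma countClassFactors_mul {a' b' q m k : ℕ} (hm : m ≠ 0) (hk : k ≠ 0) :
    countClassFactors a' b' q (m * k) =
      countClassFactors a' b' q m + countClassFactors a' b' q k := by
  unfold countClassFactors
  rw [← List.length_append, ← List.filter_append]
  exact ((Nat.perm_primeFactorsList_mul hm hk).filter _).length_eq

lemma countClassFactors_prime_le_one (a' b' q : ℕ) {p : ℕ} (hp : p.Prime) :
    countClassFactors a' b' q p ≤ 1 := by
  unfold countClassFactors
  rw [Nat.primeFactorsList_prime hp]
  exact List.length_filter_le _ _

lemma exists_prime_mul_of_one_lt_countClassFactors {a' b' q w : ℕ}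
    (h : 1 < countClassFactors a' b' q w) :
    ∃ p v, p.Prime ∧ p ≡ a' [MOD b'] ∧ 1 < v ∧ w = p * v := by
  obtain ⟨p, hp⟩ := List.exists_mem_of_length_pos (Nat.zero_lt_of_lt h)
  obtain ⟨hpw, hpa⟩ := List.mem_filter.mp hp
  have hprime := Nat.prime_of_mem_primeFactorsList hpw
  obtain ⟨v, rfl⟩ := Nat.dvd_of_mem_primeFactorsList hpw
  refine ⟨p, v, hprime, (of_decide_eq_true hpa).1, ?_, rfl⟩
  have hv0 : v ≠ 0 := by
    rintro rfl
    simp [countClassFactors] at h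
  rw [countClassFactors_mul hprime.ne_zero hv0] at h
  have hp1 := countClassFactors_prime_le_one a' b' q hprime
  by_contra! hv1
  obtain rfl : v = 1 := by omega
  have h1 : countClassFactors a' b' q 1 = 0 := by simp [countClassFactors]
  omega

lemma mul_modEq_one_of_sq_modEq {q a' b' : ℕ} (hq : q ≠ 0) (hcop : a'.Coprime b')
    (h : (q * a') ^ 2 ≡ q * a' [MOD q * b']) : q * a' ≡ 1 [MOD b'] :=
  Nat.ModEq.cancel_left_of_coprime (c := a') hcop.symm <|
    Nat.ModEq.mul_left_cancel' hq (by convert h using 1 <;> ring)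

lemma modEq_of_mul_modEq_of_mul_modEq_one {q a' b' p v : ℕ} (hqa : q * a' ≡ 1 [MOD b'])
    (hp : p ≡ a' [MOD b']) (h : q * (p * v) ≡ a' [MOD b']) : v ≡ a' [MOD b'] :=
  calc v = v * 1 := (mul_one v).symm
    _ ≡ v * (q * a') [MOD b'] := hqa.symm.mul_left v
    _ ≡ v * (q * p) [MOD b'] := (hp.symm.mul_left q).mul_left v
    _ = q * (p * v) := by ring
    _ ≡ a' [MOD b'] := h

lemma memACM_mul_left {q a' b' x : ℕ} (hx : 1 ≤ q * x) (hxa : x ≡ a' [MOD b']) :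
    memACM (q * a') (q * b') (q * x) :=
  Or.inl ⟨hx, hxa.mul_left' q⟩

theorem acm_atom_factor_count_general (a b : ℕ)
    (hidem : a ^ 2 ≡ a [MOD b]) (q a' b' : ℕ) (hq : q = Nat.gcd a b)
    (ha' : a = q * a') (hb' : b = q * b')
    (n : ℕ) (hnM : memACM a b n) (hq2 : q ^ 2 ∣ n)
    (hatom : ¬ ∃ m m' : ℕ, memACM a b m ∧ memACM a b m' ∧ 1 < m ∧ 1 < m' ∧ n = m * m') :
    countClassFactors a' b' q n ≤ countClassFactors a' b' q (q ^ 2) + 1 := by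
  have hn0 : n ≠ 0 := by rcases hnM with ⟨h, _⟩ | h <;> omega
  obtain ⟨w, rfl⟩ := hq2
  have hq0 : q ≠ 0 := fun h => hn0 (by simp [h])
  subst ha' hb'
  rw [countClassFactors_mul (left_ne_zero_of_mul hn0) (right_ne_zero_of_mul hn0),
    add_le_add_iff_left]
  by_contra! hw
  obtain ⟨p, v, hp, hpa, hv, rfl⟩ := exists_prime_mul_of_one_lt_countClassFactors hw
  have hq1 : 1 ≤ q := Nat.one_le_iff_ne_zero.mpr hq0
  have hcop : a'.Coprime b' := by
    rw [Nat.gcd_mul_left] at hq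
    exact (mul_eq_left₀ hq0).mp hq.symm
  have hqa := mul_modEq_one_of_sq_modEq hq0 hcop hidem
  have hqw : q * (p * v) ≡ a' [MOD b'] := by
    refine Nat.ModEq.mul_left_cancel' hq0 ?_
    rcases hnM with ⟨_, h⟩ | h
    · convert h using 1; ring
    · simp only [mul_eq_one] at h
      exact absurd h.2.1 hp.ne_one
  have hva := modEq_of_mul_modEq_of_mul_modEq_one hqa hpa hqw
  exact hatom ⟨q * p, q * v, memACM_mul_left (by nlinarith [hp.two_le]) hpa,
    memACM_mul_left (by nlinarith) hva, by nlinarith [hp.two_le], by nlinarith, by ring⟩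

theorem acm_atom_factor_count (a b : ℕ) (ha : 1 ≤ a) (hab : a < b)
    (hidem : a ^ 2 ≡ a [MOD b]) (q a' b' : ℕ) (hq : q = Nat.gcd a b)
    (ha' : a = q * a') (hb' : b = q * b')
    (n : ℕ) (hnM : memACM a b n) (hn1 : 1 < n) (hq2 : q ^ 2 ∣ n)
    (hatom : ¬ ∃ m m' : ℕ, memACM a b m ∧ memACM a b m' ∧ 1 < m ∧ 1 < m' ∧ n = m * m') :
    countClassFactors a' b' q n ≤ countClassFactors a' b' q (q ^ 2) + 1 :=
  acm_atom_factor_count_general a b hidem q a' b' hq ha' hb' n hnM hq2 hatom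
end

section
/- For a regular ACM M_{1,b} (b ≥ 2), there is a uniform bound N (depending only on b) such that every atom of M_{1,b} has at most N prime factors counted with multiplicity. -/
/-- Membership in the regular ACM `M_{1,b}`. -/
def memReg (b n : ℕ) : Prop := 1 ≤ n ∧ n ≡ 1 [MOD b]

theorem regular_acm_bounded_atoms (b : ℕ) (hb : 2 ≤ b) :
    ∃ N : ℕ, ∀ n : ℕ, memReg b n → 1 < n →
      (¬ ∃ m m' : ℕ, memReg b m ∧ memReg b m' ∧ 1 < m ∧ 1 < m' ∧ n = m * m') →
      n.primeFactorsList.length ≤ N := by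
  haveI : NeZero b := ⟨by omega⟩
  refine ⟨b, ?_⟩
  intro n hn hn1 hatom
  by_contra hlen
  push_neg at hlen
  apply hatom
  set l := n.primeFactorsList with hl
  have hn0 : n ≠ 0 := by omega
  have hprod : l.prod = n := Nat.prod_primeFactorsList hn0
  have hcop : n.Coprime b := by
    have h2 := hn.2
    unfold Nat.ModEq at h2
    have : Nat.gcd b n = 1 := by
      rw [Nat.gcd_rec, h2, Nat.one_mod_eq_one.mpr (by omega)]
      simp
    exact Nat.Coprime.symm this
  -- pigeonhole on prefix products mod b
  have hcard : Fintype.card (ZMod b) < Fintype.card (Fin (b+1)) := by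
    simp [ZMod.card]
  obtain ⟨i, j, hij, hfij⟩ := Fintype.exists_ne_map_eq_of_card_lt
      (fun k : Fin (b+1) => ((l.take (k : ℕ)).prod : ZMod b)) hcard
  -- reduce to i < j
  have key : ∀ i j : ℕ, i < j → j ≤ b →
      ((l.take i).prod : ZMod b) = ((l.take j).prod : ZMod b) →
      ∃ m m' : ℕ, memReg b m ∧ memReg b m' ∧ 1 < m ∧ 1 < m' ∧ n = m * m' := by
    intro i j hij hjb hfij
    set seg := (l.drop i).take (j - i) with hseg
    set m := seg.prod with hm
    set R := (l.drop j).prod with hR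
    set Pi := (l.take i).prod with hPi
    have htake : l.take j = l.take i ++ seg := by
      rw [hseg, ← List.take_add]
      congr 1
      omega
    have hsplitn : n = Pi * m * R := by
      rw [← hprod]
      conv_lhs => rw [← List.take_append_drop j l]
      rw [List.prod_append, htake, List.prod_append]
    -- seg and drop j are nonempty
    have hlenl : b < l.length := hlen
    have hseg_ne : seg ≠ [] := by
      have : seg.length = min (j - i) (l.length - i) := by
        simp [hseg]
      intro h
      rw [h] at this
      simp at this
      omega
    have hdrop_ne : l.drop j ≠ [] := by
      intro h
      have := congrArg List.length h
      simp at this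
      omega
    -- primes
    have hsegsub : ∀ p ∈ seg, p ∈ l := fun p hp =>
      List.drop_subset i l (List.take_subset _ _ hp)
    have hp : seg.head hseg_ne ∈ seg := List.head_mem hseg_ne
    have hpprime : (seg.head hseg_ne).Prime :=
      Nat.prime_of_mem_primeFactorsList (hsegsub _ hp)
    have hpdvd : seg.head hseg_ne ∣ m := List.dvd_prod hp
    have hq : (l.drop j).head hdrop_ne ∈ l :=
      List.drop_subset j l (List.head_mem hdrop_ne)
    have hqprime : ((l.drop j).head hdrop_ne).Prime :=
      Nat.prime_of_mem_primeFactorsList hq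
    have hqdvd : (l.drop j).head hdrop_ne ∣ R := List.dvd_prod (List.head_mem hdrop_ne)
    have hm0 : m ≠ 0 := by
      intro h
      rw [h] at hsplitn
      simp at hsplitn
      omega
    have hR0 : R ≠ 0 := by
      intro h
      rw [h] at hsplitn
      simp at hsplitn
      omega
    have hPi0 : Pi ≠ 0 := by
      intro h
      rw [h] at hsplitn
      simp at hsplitn
      omega
    have hm1 : 1 < m :=
      lt_of_lt_of_le hpprime.one_lt (Nat.le_of_dvd (Nat.pos_of_ne_zero hm0) hpdvd)
    have hR1 : 1 < R :=
      lt_of_lt_of_le hqprime.one_lt (Nat.le_of_dvd (Nat.pos_of_ne_zero hR0) hqdvd)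
    -- Pi is a unit mod b
    have hPidvd : Pi ∣ n := ⟨m * R, by rw [hsplitn]; ring⟩
    have hPicop : Pi.Coprime b := Nat.Coprime.coprime_dvd_left hPidvd hcop
    have hPiunit : IsUnit ((Pi : ZMod b)) := (ZMod.isUnit_iff_coprime Pi b).mpr hPicop
    -- m ≡ 1 mod b
    have hPj : (l.take j).prod = Pi * m := by rw [htake, List.prod_append]
    have hmmod : ((m : ZMod b)) = 1 := by
      have : (Pi : ZMod b) * m = (Pi : ZMod b) * 1 := by
        rw [mul_one, ← Nat.cast_mul, ← hPj, ← hfij]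
      exact hPiunit.mul_left_cancel this
    have hmMod : m ≡ 1 [MOD b] := by
      have : ((m : ZMod b)) = ((1 : ℕ) : ZMod b) := by simpa using hmmod
      exact (ZMod.natCast_eq_natCast_iff m 1 b).mp this
    -- m' and its congruence
    set m' := Pi * R with hm'
    have hnm : n = m * m' := by rw [hsplitn, hm']; ring
    have hnmod : ((n : ZMod b)) = 1 := by
      have := (ZMod.natCast_eq_natCast_iff n 1 b).mpr hn.2
      simpa using this
    have hm'mod : ((m' : ZMod b)) = 1 := by
      have : ((m : ZMod b)) * m' = 1 := by
        rw [← Nat.cast_mul, ← hnm, hnmod]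
      rwa [hmmod, one_mul] at this
    have hm'Mod : m' ≡ 1 [MOD b] := by
      have : ((m' : ZMod b)) = ((1 : ℕ) : ZMod b) := by simpa using hm'mod
      exact (ZMod.natCast_eq_natCast_iff m' 1 b).mp this
    have hm'1 : 1 < m' := by
      have hPi1 : 1 ≤ Pi := Nat.pos_of_ne_zero hPi0
      calc 1 < R := hR1
        _ ≤ Pi * R := Nat.le_mul_of_pos_left R hPi1
    exact ⟨m, m', ⟨by omega, hmMod⟩, ⟨by omega, hm'Mod⟩, hm1, hm'1, hnm⟩
  rcases lt_or_gt_of_ne hij with h | h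
  · exact key i j h (by omega) hfij
  · exact key j i h (by omega) hfij.symm
end

section
/- Let a, b be coprime positive integers. If n ∈ ℤ≥1 with n ≡ 1 (mod b) is a product of more than D primes each congruent to a modulo b, where D is the multiplicative order of a in (ℤ/b)*, then n is reducible in M_{1,b}. -/
theorem Nat.ModEq.listProd_pow_length {n a : ℕ} {l : List ℕ} (h : ∀ x ∈ l, x ≡ a [MOD n]) :
    l.prod ≡ a ^ l.length [MOD n] := by
  simpa using Nat.ModEq.listProd_map (f := id) (g := fun _ => a) h

theorem Nat.ModEq.modEq_one_of_mul_left {n m m' : ℕ} (h : m * m' ≡ 1 [MOD n])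
    (hm : m ≡ 1 [MOD n]) : m' ≡ 1 [MOD n] := by
  simpa using (hm.mul_right m').symm.trans h

theorem pow_orderOf_unitOfCoprime_modEq_one {a b : ℕ} (h : a.Coprime b) :
    a ^ orderOf (ZMod.unitOfCoprime a h) ≡ 1 [MOD b] := by
  rw [← ZMod.natCast_eq_natCast_iff, Nat.cast_pow, Nat.cast_one, ← ZMod.coe_unitOfCoprime a h,
    ← Units.val_pow_eq_pow_val, pow_orderOf_eq_one, Units.val_one]

theorem List.one_lt_prod_of_prime {l : List ℕ} (h : ∀ p ∈ l, p.Prime) (hl : l ≠ []) :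
    1 < l.prod :=
  l.one_lt_prod_of_one_lt (fun p hp => (h p hp).one_lt) hl

theorem regular_acm_order_reducible_general (a b : ℕ)
    (hcop : Nat.Coprime a b) (n : ℕ) (hnb : n ≡ 1 [MOD b])
    (L : List ℕ) (hL : ∀ p ∈ L, p.Prime ∧ p ≡ a [MOD b]) (hprod : n = L.prod)
    (hlen : orderOf (ZMod.unitOfCoprime a hcop) < L.length) :
    ∃ m m' : ℕ, memReg b m ∧ memReg b m' ∧ 1 < m ∧ 1 < m' ∧ n = m * m' := by
  set D := orderOf (ZMod.unitOfCoprime a hcop)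
  have hD : 0 < D := orderOf_pos _
  have hsplit : n = (L.take D).prod * (L.drop D).prod := by
    rw [hprod, List.prod_take_mul_prod_drop]
  have htake_length : (L.take D).length = D := List.length_take_of_le hlen.le
  have htake : (L.take D).prod ≡ 1 [MOD b] := by
    have h := Nat.ModEq.listProd_pow_length (l := L.take D)
      fun p hp => (hL p (List.mem_of_mem_take hp)).2
    rw [htake_length] at h
    exact h.trans (pow_orderOf_unitOfCoprime_modEq_one hcop)
  have hdrop : (L.drop D).prod ≡ 1 [MOD b] := (hsplit ▸ hnb).modEq_one_of_mul_left htake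
  have htake_gt : 1 < (L.take D).prod :=
    List.one_lt_prod_of_prime (fun p hp => (hL p (List.mem_of_mem_take hp)).1)
      (List.ne_nil_of_length_pos (by omega))
  have hdrop_gt : 1 < (L.drop D).prod :=
    List.one_lt_prod_of_prime (fun p hp => (hL p (List.mem_of_mem_drop hp)).1)
      (by simpa using hlen)
  exact ⟨_, _, ⟨htake_gt.le, htake⟩, ⟨hdrop_gt.le, hdrop⟩, htake_gt, hdrop_gt, hsplit⟩

theorem regular_acm_order_reducible (a b : ℕ) (ha : 0 < a) (hb : 0 < b)
    (hcop : Nat.Coprime a b) (n : ℕ) (hn : 1 ≤ n) (hnb : n ≡ 1 [MOD b])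
    (L : List ℕ) (hL : ∀ p ∈ L, p.Prime ∧ p ≡ a [MOD b]) (hprod : n = L.prod)
    (hlen : orderOf (ZMod.unitOfCoprime a hcop) < L.length) :
    ∃ m m' : ℕ, memReg b m ∧ memReg b m' ∧ 1 < m ∧ 1 < m' ∧ n = m * m' :=
  regular_acm_order_reducible_general a b hcop n hnb L hL hprod hlen
end
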